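/- Non-degeneracy: there exists $c > 0$ depending only on $n$ such that the following holds. Let $\varepsilon \in (0,1)$ and let $u \geq 0$ be a continuous function on the unit ball $B_1 \subset \mathbb{R}^{n+1}$, smooth on the open set $\{u > 0\}$, satisfying $-\varepsilon \partial_{tt} u + \partial_t u - \Delta_x u = -1$ in $\{u > 0\} \cap B_1$. Then for every $(z,\tau) \in \overline{\{u > 0\}} \cap B_{1/2}$ and every $r \in (0, 1/2)$, $\sup_{B_r(z,\tau)} u \geq c r^2$. One may take $c = \frac{1}{2(n+2)}$. -/

import Mathlib

open MeasureTheory Set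

/-- Time derivative `∂ₜ u` at `p = (x,t)`. -/
noncomputable def pt {n : ℕ} (u : EuclideanSpace ℝ (Fin n) × ℝ → ℝ)
    (p : EuclideanSpace ℝ (Fin n) × ℝ) : ℝ :=
  deriv (fun s => u (p.1, s)) p.2

/-- Second time derivative `∂ₜₜ u` at `p = (x,t)`. -/
noncomputable def ptt {n : ℕ} (u : EuclideanSpace ℝ (Fin n) × ℝ → ℝ)
    (p : EuclideanSpace ℝ (Fin n) × ℝ) : ℝ :=
  deriv (deriv (fun s => u (p.1, s))) p.2

/-- Spatial Laplacian `Δₓ u` at `p = (x,t)`. -/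
noncomputable def lapx {n : ℕ} (u : EuclideanSpace ℝ (Fin n) × ℝ → ℝ)
    (p : EuclideanSpace ℝ (Fin n) × ℝ) : ℝ :=
  ∑ i : Fin n,
    deriv (deriv (fun s : ℝ => u (p.1 + s • EuclideanSpace.single i (1 : ℝ), p.2))) 0

open Filter Metric

lemma sd_test {g : ℝ → ℝ} {a : ℝ} (hg : ∀ᶠ x in nhds a, DifferentiableAt ℝ g x)
    (hg' : DifferentiableAt ℝ (deriv g) a) (hmax : IsLocalMax g a) :
    deriv (deriv g) a ≤ 0 := by
  by_contra hL
  push_neg at hL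
  have hd0 : deriv g a = 0 := hmax.deriv_eq_zero
  have hslope : Tendsto (slope (deriv g) a) (nhdsWithin a {a}ᶜ) (nhds (deriv (deriv g) a)) :=
    hasDerivAt_iff_tendsto_slope.1 hg'.hasDerivAt
  have hev : ∀ᶠ y in nhdsWithin a (Ioi a), 0 < deriv g y := by
    have h1 : ∀ᶠ y in nhdsWithin a {a}ᶜ, 0 < slope (deriv g) a y :=
      hslope.eventually (lt_mem_nhds hL)
    have h2 : ∀ᶠ y in nhdsWithin a (Ioi a), 0 < slope (deriv g) a y :=
      h1.filter_mono (nhdsWithin_mono a (fun y hy => (ne_of_gt hy : y ≠ a)))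
    filter_upwards [h2, self_mem_nhdsWithin] with y hy hy'
    have hya : (0:ℝ) < y - a := sub_pos.2 hy'
    have := mul_pos hy hya
    rwa [slope_def_field, div_mul_cancel₀ _ (ne_of_gt hya), hd0, sub_zero] at this
  have hev2 : ∀ᶠ y in nhdsWithin a (Ioi a), DifferentiableAt ℝ g y :=
    nhdsWithin_le_nhds hg
  have hev3 : ∀ᶠ y in nhdsWithin a (Ioi a), g y ≤ g a :=
    nhdsWithin_le_nhds hmax
  obtain ⟨u', hu', hsub⟩ := mem_nhdsGT_iff_exists_Ioo_subset.1
    ((hev.and (hev2.and hev3)) : _ ∈ nhdsWithin a (Ioi a))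
  set b := (a + u') / 2 with hb
  have hab : a < b := by simp only [hb]; linarith [mem_Ioi.1 hu']
  have hbu : b < u' := by simp only [hb]; linarith [mem_Ioi.1 hu']
  have hmono : StrictMonoOn g (Icc a b) := by
    apply strictMonoOn_of_deriv_pos (convex_Icc a b)
    · intro x hx
      rcases eq_or_lt_of_le hx.1 with h | h
      · exact (h ▸ hg.self_of_nhds).continuousAt.continuousWithinAt
      · exact ((hsub ⟨h, lt_of_le_of_lt hx.2 hbu⟩).2.1).continuousAt.continuousWithinAt
    · intro x hx
      rw [interior_Icc] at hx
      exact (hsub ⟨hx.1, hx.2.trans hbu⟩).1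
  have h1 : g a < g b := hmono ⟨le_refl a, hab.le⟩ ⟨hab.le, le_refl b⟩ hab
  have h2 : g b ≤ g a := (hsub ⟨hab, hbu⟩).2.2
  linarith

lemma key1d {f : ℝ → ℝ} {a b c d : ℝ}
    (hf : ∀ᶠ x in nhds a, DifferentiableAt ℝ f x)
    (hf' : DifferentiableAt ℝ (deriv f) a)
    (hmax : IsLocalMax (fun s => f s - (c * s ^ 2 + b * s + d)) a) :
    deriv f a = 2 * c * a + b ∧ deriv (deriv f) a ≤ 2 * c := by
  set g : ℝ → ℝ := fun s => f s - (c * s ^ 2 + b * s + d) with hgdef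
  have hpoly : ∀ x : ℝ, DifferentiableAt ℝ (fun s : ℝ => c * s ^ 2 + b * s + d) x := by
    intro x; fun_prop
  have hgd : ∀ᶠ x in nhds a, DifferentiableAt ℝ g x := by
    filter_upwards [hf] with x hx; exact hx.sub (hpoly x)
  have hderiv : ∀ᶠ x in nhds a, deriv g x = deriv f x - (2 * c * x + b) := by
    filter_upwards [hf] with x hx
    rw [hgdef, deriv_fun_sub hx (hpoly x)]
    congr 1
    have h1 : HasDerivAt (fun s : ℝ => s ^ 2) (2 * x) x := by
      simpa using hasDerivAt_pow 2 x
    have hq : HasDerivAt (fun s : ℝ => c * s ^ 2 + b * s + d) (2 * c * x + b) x := by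
      have := ((h1.const_mul c).add ((hasDerivAt_id x).const_mul b)).add_const d
      exact this.congr_deriv (by ring)
    exact hq.deriv
  have hderiv_eq : deriv g =ᶠ[nhds a] fun x => deriv f x - (2 * c * x + b) := hderiv
  have hgd' : DifferentiableAt ℝ (deriv g) a := by
    rw [hderiv_eq.differentiableAt_iff]
    exact hf'.sub (by fun_prop)
  have hd0 : deriv g a = 0 := hmax.deriv_eq_zero
  have hfa : deriv f a = 2 * c * a + b := by
    have := hderiv.self_of_nhds
    rw [hd0] at this; linarith
  refine ⟨hfa, ?_⟩
  have h2 : deriv (deriv g) a ≤ 0 := sd_test hgd hgd' hmax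
  have h3 : deriv (deriv g) a = deriv (deriv f) a - 2 * c := by
    rw [hderiv_eq.deriv_eq, deriv_fun_sub hf' (by fun_prop)]
    congr 1
    have hq : HasDerivAt (fun x : ℝ => 2 * c * x + b) (2 * c) a := by
      have := ((hasDerivAt_id a).const_mul (2 * c)).add_const b
      exact this.congr_deriv (by ring)
    exact hq.deriv
  linarith [h3 ▸ h2]

lemma section_nice {n : ℕ} {u : EuclideanSpace ℝ (Fin n) × ℝ → ℝ}
    {U : Set (EuclideanSpace ℝ (Fin n) × ℝ)} (hU : IsOpen U)
    (husm : ContDiffOn ℝ 2 u U) {σ : ℝ → EuclideanSpace ℝ (Fin n) × ℝ}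
    (hσ : ContDiff ℝ 2 σ) {a : ℝ} (ha : σ a ∈ U) :
    (∀ᶠ x in nhds a, DifferentiableAt ℝ (fun s => u (σ s)) x) ∧
      DifferentiableAt ℝ (deriv (fun s => u (σ s))) a := by
  set W : Set ℝ := σ ⁻¹' U with hWdef
  have hW : IsOpen W := hU.preimage hσ.continuous
  have haW : a ∈ W := ha
  have h : ContDiffOn ℝ 2 (fun s => u (σ s)) W :=
    husm.comp hσ.contDiffOn (fun x hx => hx)
  constructor
  · filter_upwards [hW.mem_nhds haW] with x hx
    exact (h.differentiableOn (by norm_num)).differentiableAt (hW.mem_nhds hx)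
  · have h1 : ContDiffOn ℝ 1 (deriv fun s => u (σ s)) W :=
      h.deriv_of_isOpen hW (by norm_num)
    exact (h1.differentiableOn one_ne_zero).differentiableAt (hW.mem_nhds haW)

set_option maxHeartbeats 1000000 in
/-- Uniform non-degeneracy: there is `c > 0` depending only on `n` such that for every
`ε ∈ (0,1)`, every continuous `u ≥ 0` on `B₁`, smooth on `{u > 0}`, solving
`-ε ∂ₜₜ u + ∂ₜ u - Δₓ u = -1` in `{u > 0} ∩ B₁`, every point of
`closure{u > 0} ∩ B_{1/2}` and every `r ∈ (0,1/2)`, one has `sup_{B_r} u ≥ c r²`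
(formulated as: every upper bound `M` of `u` on `B_r` satisfies `c r² ≤ M`). -/
theorem stmt11 (n : ℕ) (hn : 1 ≤ n) :
    ∃ c : ℝ, 0 < c ∧ ∀ ε ∈ Set.Ioo (0 : ℝ) 1,
      ∀ u : EuclideanSpace ℝ (Fin n) × ℝ → ℝ,
        ContinuousOn u (Metric.ball 0 1) →
        (∀ p ∈ Metric.ball (0 : EuclideanSpace ℝ (Fin n) × ℝ) 1, 0 ≤ u p) →
        ContDiffOn ℝ (⊤ : ℕ∞) u ({p | 0 < u p} ∩ Metric.ball 0 1) →
        (∀ p ∈ {p | 0 < u p} ∩ Metric.ball (0 : EuclideanSpace ℝ (Fin n) × ℝ) 1,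
          -ε * ptt u p + pt u p - lapx u p = -1) →
        ∀ p ∈ closure ({p | 0 < u p} ∩ Metric.ball 0 1) ∩
            Metric.ball (0 : EuclideanSpace ℝ (Fin n) × ℝ) (1 / 2),
          ∀ r ∈ Set.Ioo (0 : ℝ) (1 / 2),
            ∀ M : ℝ, (∀ q ∈ Metric.ball p r, u q ≤ M) → c * r ^ 2 ≤ M := by
  refine ⟨(4 * ((n : ℝ) + 2))⁻¹, by positivity, ?_⟩
  intro ε hε u hu hupos husm hpde p hp r hr M hM
  set c : ℝ := (4 * ((n : ℝ) + 2))⁻¹ with hcdef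
  have hc : 0 < c := by positivity
  have hc4 : c * (4 * ((n : ℝ) + 2)) = 1 := by
    rw [hcdef]; field_simp
  set U : Set (EuclideanSpace ℝ (Fin n) × ℝ) := {p | 0 < u p} ∩ Metric.ball 0 1 with hUdef
  have hUopen : IsOpen U := by
    have h0 : IsOpen (Metric.ball (0 : EuclideanSpace ℝ (Fin n) × ℝ) 1 ∩ u ⁻¹' (Ioi (0:ℝ))) :=
      hu.isOpen_inter_preimage Metric.isOpen_ball isOpen_Ioi
    rw [hUdef]
    convert h0 using 1
    ext x
    simp only [mem_inter_iff, mem_setOf_eq, mem_preimage, mem_Ioi]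
    tauto
  have husm2 : ContDiffOn ℝ 2 u U := husm.of_le (WithTop.coe_le_coe.2 le_top)
  -- the key estimate for slightly smaller radii
  have key : ∀ η : ℝ, 0 < η → η < r / 4 → c * (r - 2 * η) ^ 2 ≤ M := by
    intro η hη hηr
    obtain ⟨pk, hpkU, hpkd⟩ : ∃ pk ∈ U, dist p pk < η :=
      Metric.mem_closure_iff.1 hp.1 η hη
    have hupk : 0 < u pk := hpkU.1
    set r' : ℝ := r - 2 * η with hr'def
    have hr'pos : 0 < r' := by rw [hr'def]; linarith [hr.1]
    have hr'lt : r' < 1 / 2 := by rw [hr'def]; linarith [hr.2]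
    have hpb : dist p 0 < 1 / 2 := mem_ball.1 hp.2
    have hball1 : Metric.ball p r ⊆ Metric.ball (0 : EuclideanSpace ℝ (Fin n) × ℝ) 1 := by
      intro y hy
      rw [mem_ball] at hy ⊢
      calc dist y 0 ≤ dist y p + dist p 0 := dist_triangle _ _ _
        _ < r + 1 / 2 := by linarith
        _ ≤ 1 := by linarith [hr.2]
    have hcb : Metric.closedBall pk r' ⊆ Metric.ball p r := by
      intro y hy
      rw [Metric.mem_closedBall] at hy
      rw [mem_ball]
      calc dist y p ≤ dist y pk + dist pk p := dist_triangle _ _ _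
        _ ≤ r' + η := by rw [dist_comm pk p]; linarith
        _ < r := by rw [hr'def]; linarith
    set V : Set (EuclideanSpace ℝ (Fin n) × ℝ) := U ∩ Metric.ball pk r' with hVdef
    have hVopen : IsOpen V := hUopen.inter Metric.isOpen_ball
    have hpkV : pk ∈ V := ⟨hpkU, mem_ball_self hr'pos⟩
    set w : EuclideanSpace ℝ (Fin n) × ℝ → ℝ :=
      fun q => u q - u pk - c * (‖q.1 - pk.1‖ ^ 2 + (q.2 - pk.2) ^ 2) with hwdef
    have hclV : closure V ⊆ Metric.closedBall pk r' :=
      closure_minimal (fun x hx => Metric.ball_subset_closedBall hx.2)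
        Metric.isClosed_closedBall
    have hcomp : IsCompact (closure V) :=
      (isCompact_closedBall pk r').of_isClosed_subset isClosed_closure hclV
    have hsub01 : closure V ⊆ Metric.ball (0 : EuclideanSpace ℝ (Fin n) × ℝ) 1 :=
      fun x hx => hball1 (hcb (hclV hx))
    have hwcont : ContinuousOn w (closure V) := by
      apply ((hu.mono hsub01).sub continuousOn_const).sub
      exact (Continuous.continuousOn (by fun_prop))
    obtain ⟨q, hqcl, hqmax⟩ := hcomp.exists_isMaxOn ⟨pk, subset_closure hpkV⟩ hwcont
    have hwpk : w pk = 0 := by simp [hwdef]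
    have hwq0 : 0 ≤ w q := hwpk ▸ hqmax (subset_closure hpkV)
    have hqcb : q ∈ Metric.closedBall pk r' := hclV hqcl
    have hqbr : q ∈ Metric.ball p r := hcb hqcb
    have hqb1 : q ∈ Metric.ball (0 : EuclideanSpace ℝ (Fin n) × ℝ) 1 := hball1 hqbr
    have hφ0 : 0 ≤ ‖q.1 - pk.1‖ ^ 2 + (q.2 - pk.2) ^ 2 := by positivity
    have huq : 0 < u q := by
      have h := hwq0
      simp only [hwdef] at h
      nlinarith [mul_nonneg hc.le hφ0]
    have hqU : q ∈ U := ⟨huq, hqb1⟩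
    by_cases hqV : q ∈ V
    · -- interior maximum: contradiction with the PDE
      exfalso
      have hwmax : IsLocalMax w q := by
        filter_upwards [hVopen.mem_nhds hqV] with x hx
        exact hqmax (subset_closure hx)
      -- time section
      have hσt : ContDiff ℝ 2 (fun s : ℝ => ((q.1 : EuclideanSpace ℝ (Fin n)), s)) :=
        contDiff_const.prodMk contDiff_id
      obtain ⟨hftd, hftd'⟩ := section_nice hUopen husm2 hσt (a := q.2) hqU
      have hmaxt : IsLocalMax (fun s : ℝ => w (q.1, s)) q.2 := by
        have htend : Filter.Tendsto (fun s : ℝ => ((q.1 : EuclideanSpace ℝ (Fin n)), s))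
            (nhds q.2) (nhds q) := hσt.continuous.continuousAt
        exact htend.eventually hwmax
      have hmaxt' : IsLocalMax (fun s : ℝ => u (q.1, s) -
          (c * s ^ 2 + (-2 * c * pk.2) * s +
            (u pk + c * ‖q.1 - pk.1‖ ^ 2 + c * pk.2 ^ 2))) q.2 := by
        have heqf : (fun s : ℝ => u (q.1, s) - (c * s ^ 2 + (-2 * c * pk.2) * s +
            (u pk + c * ‖q.1 - pk.1‖ ^ 2 + c * pk.2 ^ 2))) = fun s : ℝ => w (q.1, s) := by
          funext s
          simp only [hwdef]
          ring
        rw [heqf]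
        exact hmaxt
      obtain ⟨hpt1, hptt1⟩ := key1d hftd hftd' hmaxt'
      -- spatial sections
      have hlap : lapx u q ≤ 2 * c * n := by
        unfold lapx
        have hbd : ∀ i : Fin n,
            deriv (deriv (fun s : ℝ => u (q.1 + s • EuclideanSpace.single i (1 : ℝ), q.2))) 0
              ≤ 2 * c := by
          intro i
          set e : EuclideanSpace ℝ (Fin n) := EuclideanSpace.single i (1 : ℝ) with hedef
          have hσi : ContDiff ℝ 2 (fun s : ℝ => (q.1 + s • e, q.2)) :=
            (contDiff_const.add (contDiff_id.smul contDiff_const)).prodMk contDiff_const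
          obtain ⟨hgd, hgd'⟩ := section_nice hUopen husm2 hσi (a := 0)
            (by simp only [zero_smul, add_zero]; exact hqU)
          have hmaxi : IsLocalMax (fun s : ℝ => w (q.1 + s • e, q.2)) 0 := by
            have htend : Filter.Tendsto (fun s : ℝ => (q.1 + s • e, q.2)) (nhds 0) (nhds q) := by
              have h := hσi.continuous.tendsto 0
              simpa using h
            have hev := htend.eventually hwmax
            exact hev.mono fun s hs => by simpa using hs
          have hnorm : ∀ s : ℝ, ‖q.1 + s • e - pk.1‖ ^ 2 =
              ‖q.1 - pk.1‖ ^ 2 + 2 * (s * inner ℝ (q.1 - pk.1) e) + s ^ 2 := by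
            intro s
            have h1 : q.1 + s • e - pk.1 = (q.1 - pk.1) + s • e := by abel
            rw [h1, norm_add_sq_real, real_inner_smul_right, norm_smul]
            have : ‖e‖ = 1 := by rw [hedef, EuclideanSpace.norm_single]; norm_num
            rw [this]
            simp [sq_abs]
          have hmaxi' : IsLocalMax (fun s : ℝ => u (q.1 + s • e, q.2) -
              (c * s ^ 2 + (2 * c * inner ℝ (q.1 - pk.1) e) * s +
                (u pk + c * ‖q.1 - pk.1‖ ^ 2 + c * (q.2 - pk.2) ^ 2))) 0 := by
            have heqf : (fun s : ℝ => u (q.1 + s • e, q.2) -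
                (c * s ^ 2 + (2 * c * inner ℝ (q.1 - pk.1) e) * s +
                  (u pk + c * ‖q.1 - pk.1‖ ^ 2 + c * (q.2 - pk.2) ^ 2))) =
                fun s : ℝ => w (q.1 + s • e, q.2) := by
              funext s
              simp only [hwdef]
              rw [hnorm s]
              ring
            rw [heqf]
            exact hmaxi
          obtain ⟨-, h2⟩ := key1d hgd hgd' hmaxi'
          exact h2
        calc (∑ i : Fin n,
            deriv (deriv (fun s : ℝ => u (q.1 + s • EuclideanSpace.single i (1 : ℝ), q.2))) 0)
            ≤ ∑ _i : Fin n, 2 * c := Finset.sum_le_sum (fun i _ => hbd i)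
          _ = 2 * c * n := by
            rw [Finset.sum_const, Finset.card_univ, Fintype.card_fin, nsmul_eq_mul]; ring
      -- PDE at q
      have heq := hpde q ⟨huq, hqb1⟩
      have hptv : pt u q = 2 * c * (q.2 - pk.2) := by
        unfold pt; rw [hpt1]; ring
      have hpttv : ptt u q ≤ 2 * c := hptt1
      have hqt : |q.2 - pk.2| ≤ r' := by
        have h1 : dist q.2 pk.2 ≤ dist q pk := by
          rw [Prod.dist_eq]; exact le_max_right _ _
        have h2 : dist q pk ≤ r' := Metric.mem_closedBall.1 hqcb
        rw [Real.dist_eq] at h1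
        linarith
      have habs := abs_le.1 hqt
      have hεA : -(ε * ptt u q) ≥ -(2 * c) := by
        have h1 : ε * ptt u q ≤ ε * (2 * c) := mul_le_mul_of_nonneg_left hpttv hε.1.le
        have h2 : ε * (2 * c) ≤ 1 * (2 * c) :=
          mul_le_mul_of_nonneg_right hε.2.le (by positivity)
        linarith
      have hB : pt u q ≥ -(2 * c) := by
        have h1 : (0:ℝ) ≤ q.2 - pk.2 + 1 := by linarith [habs.1]
        have h2 := mul_nonneg hc.le h1
        rw [hptv]; linarith [h2]
      have hC : -(lapx u q) ≥ -(2 * c * n) := by linarith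
      have hfin : (-1 : ℝ) ≥ -(2 * c) - 2 * c - 2 * c * n := by
        rw [← heq]; linarith
      have hc4' : 4 * (c * (n:ℝ)) + 8 * c = 1 := by
        rw [hcdef]; field_simp; ring
      linarith
    · -- max on the sphere: gives the lower bound
      have hdist : r' ≤ dist q pk := by
        by_contra h
        push_neg at h
        exact hqV ⟨hqU, mem_ball.2 h⟩
      have hφr : r' ^ 2 ≤ ‖q.1 - pk.1‖ ^ 2 + (q.2 - pk.2) ^ 2 := by
        rw [Prod.dist_eq] at hdist
        rcases le_max_iff.1 hdist with h | h
        · rw [dist_eq_norm] at h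
          nlinarith [sq_nonneg (q.2 - pk.2), norm_nonneg (q.1 - pk.1)]
        · rw [Real.dist_eq] at h
          nlinarith [sq_nonneg (‖q.1 - pk.1‖), abs_nonneg (q.2 - pk.2), sq_abs (q.2 - pk.2)]
      have huqM : u q ≤ M := hM q hqbr
      have h := hwq0
      simp only [hwdef] at h
      nlinarith [mul_le_mul_of_nonneg_left hφr hc.le]
  -- pass to the limit η → 0⁺
  have hlim : Tendsto (fun η : ℝ => c * (r - 2 * η) ^ 2) (nhdsWithin 0 (Ioi 0))
      (nhds (c * r ^ 2)) := by
    have hcont : ContinuousAt (fun η : ℝ => c * (r - 2 * η) ^ 2) 0 := by fun_prop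
    have h2 := hcont.tendsto.mono_left (nhdsWithin_le_nhds (s := Ioi (0:ℝ)))
    simpa using h2
  refine le_of_tendsto hlim ?_
  filter_upwards [Ioo_mem_nhdsGT_of_mem (⟨le_refl (0:ℝ), by linarith [hr.1]⟩ :
      (0:ℝ) ∈ Ico (0:ℝ) (r/4))] with η hη
  exact key η hη.1 hη.2
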